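/- Let F be a field and let λ ∈ F be nonzero. Consider F^n (n ≥ 1), the direct sum of n copies of F with componentwise multiplication. Then rb_λ(F^n) = n; that is: (i) every Rota–Baxter operator R of weight λ on F^n satisfies R^k ∘ (R + λ·id)^{n−k} = 0 for some 0 ≤ k ≤ n, and (ii) there exists a Rota–Baxter operator R of weight λ on F^n such that for every k with 0 ≤ k ≤ n−1, R^k ∘ (R + λ·id)^{(n−1)−k} ≠ 0. -/

import Mathlib

/-!
In the idempotent basis the Rota–Baxter identity on `F^n` becomes the entry relations
`a_ki a_kj = a_ji a_kj + a_ij a_ki + δ_ij λ a_ki`. They force every diagonal entry into `{0, -λ}`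
and make `i ≺ j ↔ i ≠ j ∧ a_ij ≠ 0` a strict partial order. Sorting the basis along it makes the
matrix upper triangular, so the characteristic polynomial is `X^a (X + λ)^(n-a)` and
Cayley–Hamilton gives (i). For (ii), `-λ` times the prefix-sum operator `x ↦ (∑_{j ≤ i} x_j)_i` is
Rota–Baxter; `R` keeps the index of the first nonzero entry of a vector and `R + λ` raises it by
one, both multiplying that entry by `-λ`, so `R^k (R + λ)^m e_0` has entry `(-λ)^(k+m)` at `m`.
-/

open Finset Polynomial Matrix

def IsRotaBaxter {R A : Type*} [CommSemiring R] [Semiring A] [Algebra R A] (lam : R)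
    (P : A →ₗ[R] A) : Prop :=
  ∀ x y, P x * P y = P (P x * y + x * P y + lam • (x * y))

theorem isRotaBaxter_iff_basis {R A ι : Type*} [CommSemiring R] [Semiring A] [Algebra R A]
    (lam : R) (P : A →ₗ[R] A) (b : Module.Basis ι R A) :
    IsRotaBaxter lam P ↔
      ∀ i j, P (b i) * P (b j) = P (P (b i) * b j + b i * P (b j) + lam • (b i * b j)) := by
  refine ⟨fun h i j => h _ _, fun h x y => ?_⟩
  let μ := LinearMap.mul R A
  have key : μ.compl₁₂ P P =
      (μ.compl₁₂ P LinearMap.id + μ.compl₁₂ LinearMap.id P + lam • μ).compr₂ P :=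
    b.ext fun i => b.ext fun j => by simpa [μ, map_add] using h i j
  simpa [μ] using LinearMap.congr_fun₂ key x y

theorem isRotaBaxter_toLin'_iff {R ι : Type*} [CommSemiring R] [Fintype ι] [DecidableEq ι]
    (lam : R) (A : Matrix ι ι R) :
    IsRotaBaxter lam (toLin' A) ↔ ∀ i j k,
      A k i * A k j = A j i * A k j + A i j * A k i + if i = j then lam * A k i else 0 := by
  rw [isRotaBaxter_iff_basis lam _ (Pi.basisFun R ι)]
  refine forall₂_congr fun i j => funext_iff.trans (forall_congr' fun k => ?_)
  simp only [Pi.basisFun_apply, toLin'_apply, mulVec_single_one, Pi.mul_apply]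
  rw [← Pi.single_mul_right, ← Pi.single_mul_left, ← Pi.single_mul_left]
  rcases eq_or_ne i j with rfl | hij
  · simp [mulVec_add, ← Pi.single_smul]
  · simp [hij, mulVec_add]

theorem card_filter_rel_lt_of_rel {α : Type*} [Fintype α] {r : α → α → Prop} [DecidableRel r]
    (htrans : ∀ a b c, r a b → r b c → r a c) (hirrefl : ∀ a, ¬r a a) {a b : α} (hab : r a b) :
    #{c | r c a} < #{c | r c b} :=
  card_lt_card <| (ssubset_iff_of_subset fun c hc => by
    simp only [mem_filter, mem_univ, true_and] at hc ⊢; exact htrans _ _ _ hc hab).2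
    ⟨a, by simp [hab, hirrefl a]⟩

theorem Matrix.charpoly_eq_prod_of_transitive {R : Type*} [CommRing R] {n : ℕ}
    (M : Matrix (Fin n) (Fin n) R)
    (hM : ∀ i j k, i ≠ j ∧ M i j ≠ 0 → j ≠ k ∧ M j k ≠ 0 → i ≠ k ∧ M i k ≠ 0) :
    M.charpoly = ∏ i, (X - C (M i i)) := by
  classical
  -- strictly monotone along the support relation, so sorting by it is a linear extension
  let height i := #{k | k ≠ i ∧ M k i ≠ 0}
  have h_lt {i j} (hij : i ≠ j) (hM' : M i j ≠ 0) : height i < height j :=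
    card_filter_rel_lt_of_rel hM (fun i hi => hi.1 rfl) ⟨hij, hM'⟩
  let σ := Tuple.sort height
  have hup : (M.submatrix σ σ).IsUpperTriangular := fun i j hji => by
    by_contra hne
    exact (h_lt (σ.injective.ne hji.ne') hne).not_ge (Tuple.monotone_sort height hji.le)
  rw [← charpoly_reindex σ.symm, reindex_apply, Equiv.symm_symm,
    charpoly_of_isUpperTriangular _ hup]
  exact Equiv.prod_comp σ fun i => X - C (M i i)

section Entries

variable {K ι : Type*} [CommRing K] [Fintype ι] [DecidableEq ι] {lam : K} {A : Matrix ι ι K}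

theorem IsRotaBaxter.mul_entry_transpose_eq_zero (hA : IsRotaBaxter lam (toLin' A))
    {i j : ι} (hij : i ≠ j) : A i j * A j i = 0 := by
  have := (isRotaBaxter_toLin'_iff lam A).1 hA i j i
  rw [if_neg hij] at this
  linear_combination -this

variable [IsDomain K]

theorem IsRotaBaxter.diag_eq_zero_or_eq_neg (hA : IsRotaBaxter lam (toLin' A)) (i : ι) :
    A i i = 0 ∨ A i i = -lam := by
  have := (isRotaBaxter_toLin'_iff lam A).1 hA i i i
  rw [if_pos rfl] at this
  exact (mul_eq_zero.1 (by linear_combination -this : A i i * (A i i + lam) = 0)).imp_right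
    eq_neg_of_add_eq_zero_left

theorem IsRotaBaxter.offDiag_support_trans (hA : IsRotaBaxter lam (toLin' A))
    (i j k : ι) (hij : i ≠ j ∧ A i j ≠ 0) (hjk : j ≠ k ∧ A j k ≠ 0) : i ≠ k ∧ A i k ≠ 0 := by
  have hkj : A k j = 0 :=
    (mul_eq_zero.1 (hA.mul_entry_transpose_eq_zero hjk.1)).resolve_left hjk.2
  have hik : A i k = A j k := by
    have := (isRotaBaxter_toLin'_iff lam A).1 hA j k i
    rw [if_neg hjk.1, hkj] at this
    exact sub_eq_zero.1 <| (mul_eq_zero.1 (by linear_combination this :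
      A i j * (A i k - A j k) = 0)).resolve_left hij.2
  exact ⟨by rintro rfl; exact hij.2 hkj, hik ▸ hjk.2⟩

end Entries

theorem prod_X_sub_C_of_forall_eq_zero_or_eq_neg {K ι : Type*} [CommRing K] [Fintype ι]
    {lam : K} (d : ι → K) (hd : ∀ i, d i = 0 ∨ d i = -lam) :
    ∃ a b, a + b = Fintype.card ι ∧ ∏ i, (X - C (d i)) = X ^ a * (X + C lam) ^ b := by
  classical
  refine ⟨#{i | d i = 0}, #{i | ¬d i = 0}, card_filter_add_card_filter_not _, ?_⟩
  have h (i) : X - C (d i) = if d i = 0 then X else X + C lam := by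
    split_ifs with h0
    · simp [h0]
    · simp [(hd i).resolve_left h0]
  simp_rw [h, prod_ite, prod_const]

theorem IsRotaBaxter.exists_charpoly_eq {K : Type*} [CommRing K] [IsDomain K] {lam : K} {n : ℕ}
    {R : Module.End K (Fin n → K)} (hR : IsRotaBaxter lam R) :
    ∃ a b, a + b = n ∧ R.charpoly = X ^ a * (X + C lam) ^ b := by
  rw [← Matrix.toLin'_toMatrix' R] at hR
  rw [← LinearMap.charpoly_toMatrix R (Pi.basisFun K _), LinearMap.toMatrix_eq_toMatrix',
    Matrix.charpoly_eq_prod_of_transitive _ hR.offDiag_support_trans]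
  simpa using prod_X_sub_C_of_forall_eq_zero_or_eq_neg _ hR.diag_eq_zero_or_eq_neg

theorem IsRotaBaxter.exists_pow_mul_add_smul_pow_eq_zero {K : Type*} [CommRing K] [IsDomain K]
    {lam : K} {n : ℕ}
    {R : Module.End K (Fin n → K)} (hR : IsRotaBaxter lam R) :
    ∃ k ≤ n, R ^ k * (R + lam • LinearMap.id) ^ (n - k) = 0 := by
  obtain ⟨a, b, rfl, hchar⟩ := hR.exists_charpoly_eq
  refine ⟨a, le_add_right le_rfl, ?_⟩
  simpa [hchar, Module.algebraMap_end_eq_smul_id] using R.aeval_self_charpoly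

def lowerTriangularConst {K : Type*} [Zero K] (ι : Type*) [LinearOrder ι] (c : K) :
    Matrix ι ι K :=
  of fun i j => if j ≤ i then c else 0

@[simp]
theorem lowerTriangularConst_apply {K ι : Type*} [Zero K] [LinearOrder ι] (c : K) (i j : ι) :
    lowerTriangularConst ι c i j = if j ≤ i then c else 0 :=
  rfl

theorem isRotaBaxter_toLin'_lowerTriangularConst {K ι : Type*} [CommRing K] [Fintype ι]
    [LinearOrder ι] (lam : K) : IsRotaBaxter lam (toLin' (lowerTriangularConst ι (-lam))) := by
  rw [isRotaBaxter_toLin'_iff]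
  intro i j k
  simp only [lowerTriangularConst_apply]
  split_ifs <;> first | ring1 | (exfalso; order)

section LeadingEntry

variable {K : Type*} [CommRing K] {n : ℕ}

def HasLeadingEntry (x : Fin n → K) (p : ℕ) (c : K) : Prop :=
  (∀ j : Fin n, (j : ℕ) < p → x j = 0) ∧ ∀ j : Fin n, (j : ℕ) = p → x j = c

theorem HasLeadingEntry.mulVec {M : Matrix (Fin n) (Fin n) K} {d : ℕ} {c : K}
    (hM : ∀ i j : Fin n, (i : ℕ) < j + d → M i j = 0)
    (hc : ∀ i j : Fin n, (i : ℕ) = j + d → M i j = c)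
    {x : Fin n → K} {p : ℕ} {v : K} (hx : HasLeadingEntry x p v) :
    HasLeadingEntry (M *ᵥ x) (p + d) (c * v) := by
  constructor
  · intro i hi
    rw [Matrix.mulVec, dotProduct]
    refine sum_eq_zero fun j _ => ?_
    by_cases hj : (j : ℕ) < p
    · rw [hx.1 j hj, mul_zero]
    · rw [hM i j (by omega), zero_mul]
  · intro i hi
    have hp : p < n := by have := i.isLt; omega
    rw [Matrix.mulVec, dotProduct, sum_eq_single ⟨p, hp⟩ fun j _ hj => ?_, hc i _ hi, hx.2 _ rfl]
    · simp
    rcases lt_or_gt_of_ne (fun h => hj (Fin.ext h) : (j : ℕ) ≠ p) with hj | hj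
    · rw [hx.1 j hj, mul_zero]
    · rw [hM i j (by omega), zero_mul]

theorem HasLeadingEntry.pow_mulVec {M : Matrix (Fin n) (Fin n) K} {d : ℕ} {c : K}
    (hM : ∀ i j : Fin n, (i : ℕ) < j + d → M i j = 0)
    (hc : ∀ i j : Fin n, (i : ℕ) = j + d → M i j = c)
    {x : Fin n → K} {p : ℕ} {v : K} (hx : HasLeadingEntry x p v) (k : ℕ) :
    HasLeadingEntry ((M ^ k) *ᵥ x) (p + k * d) (c ^ k * v) := by
  induction k with
  | zero => simpa using hx
  | succ k ih =>
    rw [pow_succ', ← mulVec_mulVec]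
    convert ih.mulVec hM hc using 1 <;> ring

end LeadingEntry

theorem lowerTriangularConst_neg_add_smul_one_apply {K ι : Type*} [CommRing K] [LinearOrder ι]
    [DecidableEq ι] (c : K) (i j : ι) :
    (lowerTriangularConst ι (-c) + c • 1) i j = if j < i then -c else 0 := by
  rcases lt_trichotomy j i with h | rfl | h
  · simp [h.le, h, h.ne']
  · simp
  · simp [h.not_ge, h.not_gt, h.ne]

theorem lowerTriangularConst_pow_mul_add_smul_pow_ne_zero {K : Type*} [CommRing K] [IsDomain K]
    {lam : K} (hlam : lam ≠ 0) {n k m : ℕ} (hkm : k + m < n) :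
    toLin' (lowerTriangularConst (Fin n) (-lam)) ^ k *
      (toLin' (lowerTriangularConst (Fin n) (-lam)) + lam • LinearMap.id) ^ m ≠ 0 := by
  have hA₀ (i j : Fin n) (h : (i : ℕ) < j + 0) : lowerTriangularConst (Fin n) (-lam) i j = 0 := by
    rw [lowerTriangularConst_apply, if_neg (by rw [Fin.le_def]; omega)]
  have hA (i j : Fin n) (h : (i : ℕ) = j + 0) :
      lowerTriangularConst (Fin n) (-lam) i j = -lam := by
    rw [lowerTriangularConst_apply, if_pos (by rw [Fin.le_def]; omega)]
  have hB₀ (i j : Fin n) (h : (i : ℕ) < j + 1) :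
      (lowerTriangularConst (Fin n) (-lam) + lam • 1) i j = 0 := by
    rw [lowerTriangularConst_neg_add_smul_one_apply, if_neg (by rw [Fin.lt_def]; omega)]
  have hB (i j : Fin n) (h : (i : ℕ) = j + 1) :
      (lowerTriangularConst (Fin n) (-lam) + lam • 1) i j = -lam := by
    rw [lowerTriangularConst_neg_add_smul_one_apply, if_pos (by rw [Fin.lt_def]; omega)]
  have he : HasLeadingEntry (Pi.single (⟨0, by omega⟩ : Fin n) (1 : K)) 0 1 :=
    ⟨fun j hj => by omega,
      fun j hj => by rw [show j = ⟨0, by omega⟩ from Fin.ext hj, Pi.single_eq_same]⟩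
  have hlead := ((he.pow_mulVec hB₀ hB m).pow_mulVec hA₀ hA k).2 ⟨m, by omega⟩ (by simp)
  rw [← toLin'_one, ← map_smul, ← map_add, ← toLin'_pow, ← toLin'_pow, Module.End.mul_eq_comp,
    ← toLin'_mul]
  intro h
  have := congrFun (LinearMap.congr_fun h (Pi.single ⟨0, by omega⟩ 1)) ⟨m, by omega⟩
  rw [toLin'_apply, ← mulVec_mulVec, hlead] at this
  simp [hlam] at this

/-- For a field `F`, nonzero `lam ∈ F` and `n ≥ 1`, the Rota–Baxter
`lam`-index of `F^n` equals `n`: (i) every Rota–Baxter operator `R` of weight `lam` on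
`F^n` satisfies `R^k ∘ (R + lam•id)^(n−k) = 0` for some `k ≤ n`, and (ii) some
Rota–Baxter operator `R` of weight `lam` satisfies
`R^k ∘ (R + lam•id)^((n−1)−k) ≠ 0` for every `k ≤ n−1`. -/
theorem rb_index_of_sum_of_fields
    {F : Type*} [Field F] (lam : F) (hlam : lam ≠ 0) (n : ℕ) (hn : 1 ≤ n) :
    (∀ R : (Fin n → F) →ₗ[F] (Fin n → F),
      (∀ x y : Fin n → F, R x * R y = R (R x * y + x * R y + lam • (x * y))) →
      ∃ k ≤ n, R ^ k * (R + lam • LinearMap.id) ^ (n - k) = 0) ∧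
    (∃ R : (Fin n → F) →ₗ[F] (Fin n → F),
      (∀ x y : Fin n → F, R x * R y = R (R x * y + x * R y + lam • (x * y))) ∧
      ∀ k ≤ n - 1, R ^ k * (R + lam • LinearMap.id) ^ ((n - 1) - k) ≠ 0) :=
  ⟨fun _ hR => IsRotaBaxter.exists_pow_mul_add_smul_pow_eq_zero hR,
    _, isRotaBaxter_toLin'_lowerTriangularConst lam, fun _ _ =>
      lowerTriangularConst_pow_mul_add_smul_pow_ne_zero hlam (by omega)⟩
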